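/- arXiv:1410.3976 — 3 statements merged into one kernel-verified Lean document; each statement's English description precedes it below -/
import Mathlib

section
/- Let μ be a probability vector on a finite set X, ℓ : X → ℝ with maximizing set X⁰ := {i : ℓ_i = ℓ_max}, and suppose R ≤ R_max := 2(1 − Σ_{i∈X⁰} μ_i). Then any probability vector ν in the TV ball of radius R around μ satisfies Σ_{i∈X⁰} ν_i ≤ Σ_{i∈X⁰} μ_i + R/2, and this bound is tight: there exists a probability vector ν with ‖ν − μ‖_TV ≤ R and Σ_{i∈X⁰} ν_i = Σ_{i∈X⁰} μ_i + R/2. -/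
theorem max_set_mass_bound_tight {X : Type*} [Fintype X] [Nonempty X] (μ ℓ : X → ℝ)
    (hμ0 : ∀ i, 0 ≤ μ i) (hμ1 : ∑ i, μ i = 1)
    (Xsup : Finset X)
    (hXsup : ∀ i, i ∈ Xsup ↔ ℓ i = Finset.univ.sup' Finset.univ_nonempty ℓ)
    (R : ℝ) (hR0 : 0 ≤ R) (hRmax : R ≤ 2 * (1 - ∑ i ∈ Xsup, μ i)) :
    (∀ ν : X → ℝ, (∀ i, 0 ≤ ν i) → ∑ i, ν i = 1 → ∑ i, |ν i - μ i| ≤ R →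
      ∑ i ∈ Xsup, ν i ≤ ∑ i ∈ Xsup, μ i + R / 2) ∧
    (∃ ν : X → ℝ, (∀ i, 0 ≤ ν i) ∧ ∑ i, ν i = 1 ∧ ∑ i, |ν i - μ i| ≤ R ∧
      ∑ i ∈ Xsup, ν i = ∑ i ∈ Xsup, μ i + R / 2) := by
  classical
  obtain ⟨i0, -, hi0⟩ := Finset.exists_mem_eq_sup' Finset.univ_nonempty ℓ
  have hs : Xsup.Nonempty := ⟨i0, (hXsup i0).2 hi0.symm⟩
  set m := ∑ i ∈ Xsup, μ i with hm
  have hμc : ∑ i ∈ Xsupᶜ, μ i = 1 - m := by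
    have := Finset.sum_add_sum_compl Xsup μ
    rw [hμ1] at this; linarith
  constructor
  · intro ν hν0 hν1 hTV
    have hνc : ∑ i ∈ Xsupᶜ, ν i = 1 - ∑ i ∈ Xsup, ν i := by
      have := Finset.sum_add_sum_compl Xsup ν
      rw [hν1] at this; linarith
    have h1 : ∑ i ∈ Xsup, (ν i - μ i) ≤ ∑ i ∈ Xsup, |ν i - μ i| :=
      Finset.sum_le_sum fun i _ => le_abs_self _
    have h2 : ∑ i ∈ Xsupᶜ, (μ i - ν i) ≤ ∑ i ∈ Xsupᶜ, |ν i - μ i| :=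
      Finset.sum_le_sum fun i _ => by rw [abs_sub_comm]; exact le_abs_self _
    have h3 : ∑ i ∈ Xsup, |ν i - μ i| + ∑ i ∈ Xsupᶜ, |ν i - μ i| = ∑ i, |ν i - μ i| :=
      Finset.sum_add_sum_compl _ _
    rw [Finset.sum_sub_distrib] at h1 h2
    linarith
  · rcases eq_or_lt_of_le (show m ≤ 1 by linarith) with hm1 | hm1
    · have hR : R = 0 := le_antisymm (by rw [← hm1] at hRmax; linarith) hR0
      exact ⟨μ, hμ0, hμ1, by simp [hR], by rw [hR]; ring⟩
    · set k := (Xsup.card : ℝ) with hk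
      have hk0 : 0 < k := by
        have : 0 < Xsup.card := Finset.card_pos.mpr hs
        rw [hk]; exact_mod_cast this
      have h1m : (0:ℝ) < 1 - m := by linarith
      set c := R / 2 / (1 - m) with hc
      have hc0 : 0 ≤ c := by rw [hc]; positivity
      have hc1 : c ≤ 1 := by rw [hc, div_le_one h1m]; linarith
      have hnn : 0 ≤ R / 2 / k := by positivity
      have hsum1 : ∑ _i ∈ Xsup, (R / 2 / k) = R / 2 := by
        rw [Finset.sum_const, nsmul_eq_mul, ← hk, mul_comm]
        exact div_mul_cancel₀ _ hk0.ne'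
      have hcc : (1 - m) * c = R / 2 := by
        rw [hc, mul_comm]; exact div_mul_cancel₀ _ h1m.ne'
      refine ⟨fun i => if i ∈ Xsup then μ i + R / 2 / k else μ i * (1 - c), ?_, ?_, ?_, ?_⟩
      · intro i
        by_cases h : i ∈ Xsup <;> simp only [h, if_true, if_false]
        · linarith [hμ0 i]
        · exact mul_nonneg (hμ0 i) (by linarith)
      · rw [← Finset.sum_add_sum_compl Xsup]
        have e1 : ∑ i ∈ Xsup, (if i ∈ Xsup then μ i + R / 2 / k else μ i * (1 - c))
            = m + R / 2 := by
          rw [Finset.sum_congr rfl (fun i hi => if_pos hi), Finset.sum_add_distrib,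
            hsum1, ← hm]
        have e2 : ∑ i ∈ Xsupᶜ, (if i ∈ Xsup then μ i + R / 2 / k else μ i * (1 - c))
            = (1 - m) * (1 - c) := by
          rw [Finset.sum_congr rfl (fun i hi => if_neg (Finset.mem_compl.mp hi)),
            ← Finset.sum_mul, hμc]
        rw [e1, e2]
        have : (1 - m) * (1 - c) = (1 - m) - (1 - m) * c := by ring
        linarith
      · rw [← Finset.sum_add_sum_compl Xsup]
        have e1 : ∑ i ∈ Xsup, |(if i ∈ Xsup then μ i + R / 2 / k else μ i * (1 - c)) - μ i|
            = R / 2 := by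
          have key : ∀ i ∈ Xsup,
              |(if i ∈ Xsup then μ i + R / 2 / k else μ i * (1 - c)) - μ i| = R / 2 / k := by
            intro i hi
            rw [if_pos hi, add_sub_cancel_left, abs_of_nonneg hnn]
          rw [Finset.sum_congr rfl key, hsum1]
        have e2 : ∑ i ∈ Xsupᶜ, |(if i ∈ Xsup then μ i + R / 2 / k else μ i * (1 - c)) - μ i|
            = (1 - m) * c := by
          have key : ∀ i ∈ Xsupᶜ,
              |(if i ∈ Xsup then μ i + R / 2 / k else μ i * (1 - c)) - μ i| = μ i * c := by
            intro i hi
            rw [if_neg (Finset.mem_compl.mp hi)]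
            have h : μ i * (1 - c) - μ i = -(μ i * c) := by ring
            rw [h, abs_neg, abs_of_nonneg (mul_nonneg (hμ0 i) hc0)]
          rw [Finset.sum_congr rfl key, ← Finset.sum_mul, hμc]
        rw [e1, e2, hcc]; linarith
      · rw [Finset.sum_congr rfl (fun i hi => if_pos hi), Finset.sum_add_distrib,
          hsum1, ← hm]
end

section
/- Let μ be a probability vector on a finite set X and R ∈ [0,2]. The maximum of the entropy H(ν) = −Σ_i ν_i log ν_i over the TV ball B_R(μ) equals the min-max value: min over codeword length functions ℓ ∈ ℝ₊^X satisfying Kraft's inequality Σ_i e^{−ℓ_i} ≤ 1 of max over ν ∈ B_R(μ) of Σ_i ℓ_i ν_i. -/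
/-!
Let `a` maximise the entropy on the compact ball `B`. Gibbs' inequality `H(ν) ≤ ∑ ℓᵢ νᵢ`
for Kraft lengths `ℓ`, applied at `ν = a`, bounds the min-max value below by `H(a)`.
Conversely, comparing `a` with the points `(1 - t) a + t ν` of the convex set `B` and letting
`t → 0⁺` gives the first-order condition `∑ νᵢ (-log aᵢ) ≤ H(a)` for all `ν ∈ B`; the blow-up of
`-log` at `0` forces `supp ν ⊆ supp a` along the way. The lengths `ℓ = -log q`, with `q` a small
mixture of `a` and the uniform distribution, then satisfy Kraft's inequality and
`∑ ℓᵢ νᵢ ≤ H(a) + ε` on all of `B`.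
-/

open Real Finset Filter Topology Set

section

variable {X : Type*} [Fintype X]

noncomputable def entropy (p : X → ℝ) : ℝ := -∑ i, p i * log (p i)

noncomputable def crossEntropy (p q : X → ℝ) : ℝ := -∑ i, p i * log (q i)

def tvBall (μ : X → ℝ) (R : ℝ) : Set (X → ℝ) :=
  stdSimplex ℝ X ∩ {ν | ∑ i, |ν i - μ i| ≤ R}

theorem crossEntropy_self (p : X → ℝ) : crossEntropy p p = entropy p := rfl

theorem continuous_entropy : Continuous (entropy : (X → ℝ) → ℝ) := by
  unfold entropy
  fun_prop

theorem mem_tvBall_self {μ : X → ℝ} {R : ℝ} (hμ : μ ∈ stdSimplex ℝ X) (hR : 0 ≤ R) :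
    μ ∈ tvBall μ R :=
  ⟨hμ, by simpa using hR⟩

theorem isCompact_tvBall (μ : X → ℝ) (R : ℝ) : IsCompact (tvBall μ R) :=
  (isCompact_stdSimplex ℝ X).inter_right (isClosed_le (by fun_prop) continuous_const)

theorem convex_tvBall (μ : X → ℝ) (R : ℝ) : Convex ℝ (tvBall μ R) := by
  refine (convex_stdSimplex ℝ X).inter fun ν (hν : _ ≤ R) ν' (hν' : _ ≤ R) s t hs ht hst => ?_
  show ∑ i, |(s • ν + t • ν') i - μ i| ≤ R
  calc ∑ i, |(s • ν + t • ν') i - μ i| = ∑ i, |s * (ν i - μ i) + t * (ν' i - μ i)| := by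
        refine sum_congr rfl fun i _ => congrArg abs ?_
        simp only [Pi.add_apply, Pi.smul_apply, smul_eq_mul]
        linear_combination μ i * hst
    _ ≤ ∑ i, (s * |ν i - μ i| + t * |ν' i - μ i|) := by
        refine sum_le_sum fun i _ => (abs_add_le _ _).trans_eq ?_
        rw [abs_mul, abs_mul, abs_of_nonneg hs, abs_of_nonneg ht]
    _ = s * ∑ i, |ν i - μ i| + t * ∑ i, |ν' i - μ i| := by
        rw [sum_add_distrib, mul_sum, mul_sum]
    _ ≤ s * R + t * R := by gcongr
    _ = R := by rw [← add_mul, hst, one_mul]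

theorem setOf_exists_mem_tvBall (μ : X → ℝ) (R : ℝ) (f : (X → ℝ) → ℝ) :
    {s | ∃ ν : X → ℝ, (∀ i, 0 ≤ ν i) ∧ ∑ i, ν i = 1 ∧ ∑ i, |ν i - μ i| ≤ R ∧ s = f ν} =
      f '' tvBall μ R := by
  ext s
  simp [tvBall, stdSimplex, and_assoc, eq_comm]

theorem mul_log_add_sub_le_mul_log {x y : ℝ} (hx : 0 ≤ x) (hy : 0 ≤ y) (hxy : y = 0 → x = 0) :
    x * log y + (x - y) ≤ x * log x := by
  rcases hx.eq_or_lt with rfl | hx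
  · simpa using hy
  have hy : 0 < y := hy.lt_of_ne fun h => hx.ne' (hxy h.symm)
  have h := mul_le_mul_of_nonneg_left (log_le_sub_one_of_pos (div_pos hy hx)) hx.le
  rw [mul_sub x (y / x), mul_one, mul_div_cancel₀ y hx.ne', log_div hy.ne' hx.ne'] at h
  linarith

theorem entropy_le_crossEntropy {p q : X → ℝ} (hp : p ∈ stdSimplex ℝ X) (hq : ∀ i, 0 ≤ q i)
    (hq1 : ∑ i, q i ≤ 1) (hpq : ∀ i, q i = 0 → p i = 0) : entropy p ≤ crossEntropy p q := by
  have h := sum_le_sum fun i (_ : i ∈ Finset.univ) =>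
    mul_log_add_sub_le_mul_log (hp.1 i) (hq i) (hpq i)
  rw [sum_add_distrib, sum_sub_distrib, hp.2] at h
  rw [entropy, crossEntropy]
  linarith

theorem entropy_le_sum_mul_of_sum_exp_neg_le_one {p ℓ : X → ℝ} (hp : p ∈ stdSimplex ℝ X)
    (hℓ : ∑ i, exp (-ℓ i) ≤ 1) : entropy p ≤ ∑ i, ℓ i * p i := by
  have h := entropy_le_crossEntropy hp (fun i => (exp_pos _).le) hℓ
    fun i h => absurd h (exp_pos _).ne'
  simpa [crossEntropy, mul_comm] using h

theorem crossEntropy_le_of_mul_le {w a p : X → ℝ} {c : ℝ} (hw : ∀ i, 0 ≤ w i)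
    (ha : ∀ i, 0 ≤ a i) (hwa : ∀ i, a i = 0 → w i = 0) (hc : 0 < c) (hp : ∀ i, c * a i ≤ p i) :
    crossEntropy w p ≤ -(∑ i, w i) * log c + crossEntropy w a := by
  have key : ∀ i, -(w i * log (p i)) ≤ -(w i * log c) - w i * log (a i) := by
    intro i
    rcases (ha i).eq_or_lt with h | h
    · simp [hwa i h.symm]
    · have := log_le_log (by positivity) (hp i)
      rw [log_mul hc.ne' h.ne'] at this
      nlinarith [hw i]
  have h := sum_le_sum fun i (_ : i ∈ Finset.univ) => key i
  simp only [sum_neg_distrib, sum_sub_distrib, ← sum_mul] at h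
  rw [crossEntropy, crossEntropy]
  linarith

theorem neg_mul_log_le_crossEntropy {b c : X → ℝ} (hb : ∀ i, 0 ≤ b i) (hc : c ∈ stdSimplex ℝ X)
    (i : X) : -(b i * log (c i)) ≤ crossEntropy b c := by
  rw [crossEntropy, ← sum_neg_distrib]
  refine single_le_sum (f := fun j => -(b j * log (c j))) (fun j _ => ?_) (mem_univ i)
  have := mem_Icc_of_mem_stdSimplex hc j
  exact neg_nonneg.2 (mul_nonpos_of_nonneg_of_nonpos (hb j) (log_nonpos this.1 this.2))

theorem tendsto_log_one_sub_nhdsGT_zero :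
    Tendsto (fun t : ℝ => log (1 - t)) (𝓝[>] 0) (𝓝 0) := by
  have h : ContinuousAt (fun t : ℝ => log (1 - t)) 0 := by fun_prop (disch := norm_num)
  simpa using h.tendsto.mono_left nhdsWithin_le_nhds

section IsMaxOn

variable {S : Set (X → ℝ)} {a b : X → ℝ}

theorem crossEntropy_segment_le_of_isMaxOn (hS : Convex ℝ S) (hSΔ : S ⊆ stdSimplex ℝ X)
    (ha : a ∈ S) (hmax : IsMaxOn entropy S a) (hb : b ∈ S) {t : ℝ} (ht0 : 0 < t) (ht1 : t < 1) :
    crossEntropy b ((1 - t) • a + t • b) ≤ entropy a - log (1 - t) := by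
  set c := (1 - t) • a + t • b
  have hc : c ∈ S := hS ha hb (by linarith) ht0.le (by ring)
  have hA := hSΔ ha
  have hC := hSΔ hc
  have hca : ∀ i, (1 - t) * a i ≤ c i := fun i =>
    le_add_of_nonneg_right (mul_nonneg ht0.le ((hSΔ hb).1 i))
  have hgibbs : entropy a ≤ crossEntropy a c :=
    entropy_le_crossEntropy hA hC.1 hC.2.le fun i hi => by
      nlinarith [hca i, hA.1 i]
  have hsplit : entropy c = (1 - t) * crossEntropy a c + t * crossEntropy b c := by
    rw [entropy, crossEntropy, crossEntropy, mul_neg, mul_neg, mul_sum, mul_sum, ← neg_add,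
      ← sum_add_distrib]
    refine congrArg _ (sum_congr rfl fun i _ => ?_)
    rw [show c i = (1 - t) * a i + t * b i from rfl]
    ring
  -- `(1 - t) X + t Y = H(c) ≤ H(a) ≤ X` for `X = crossEntropy a c`, `Y = crossEntropy b c`
  have hba : crossEntropy b c ≤ crossEntropy a c := by
    have hmaxc : entropy c ≤ entropy a := hmax hc
    nlinarith
  have hac := crossEntropy_le_of_mul_le hA.1 hA.1 (fun _ h => h) (by linarith) hca
  rw [hA.2, crossEntropy_self] at hac
  linarith

theorem eq_zero_of_isMaxOn_entropy (hS : Convex ℝ S) (hSΔ : S ⊆ stdSimplex ℝ X)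
    (ha : a ∈ S) (hmax : IsMaxOn entropy S a) (hb : b ∈ S) {i : X} (hai : a i = 0) :
    b i = 0 := by
  by_contra hbi
  have hbi : 0 < b i := ((hSΔ hb).1 i).lt_of_ne' hbi
  have hle : ∀ t ∈ Ioo (0 : ℝ) 1, -(b i * log (t * b i)) ≤ entropy a - log (1 - t) := by
    rintro t ⟨ht0, ht1⟩
    have hc := hSΔ (hS ha hb (by linarith) ht0.le (by ring) : (1 - t) • a + t • b ∈ S)
    simpa [hai] using (neg_mul_log_le_crossEntropy (hSΔ hb).1 hc i).trans
      (crossEntropy_segment_le_of_isMaxOn hS hSΔ ha hmax hb ht0 ht1)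
  have htop : Tendsto (fun t => -(b i * log (t * b i))) (𝓝[>] 0) atTop := by
    have h := ((tendsto_neg_atBot_atTop.comp tendsto_log_nhdsGT_zero).const_mul_atTop hbi).atTop_add
      (tendsto_const_nhds (x := -(b i * log (b i))))
    refine h.congr' (eventually_mem_nhdsWithin.mono fun t (ht : 0 < t) => ?_)
    simp only [Function.comp_apply, log_mul ht.ne' hbi.ne']
    ring
  exact not_tendsto_atTop_of_tendsto_nhds (tendsto_const_nhds.sub tendsto_log_one_sub_nhdsGT_zero)
    (tendsto_atTop_mono' _ (eventually_of_mem (Ioo_mem_nhdsGT one_pos) hle) htop)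

theorem crossEntropy_le_entropy_of_isMaxOn (hS : Convex ℝ S) (hSΔ : S ⊆ stdSimplex ℝ X)
    (ha : a ∈ S) (hmax : IsMaxOn entropy S a) (hb : b ∈ S) : crossEntropy b a ≤ entropy a := by
  have hlim : Tendsto (fun t : ℝ => crossEntropy b ((1 - t) • a + t • b)) (𝓝 0)
      (𝓝 (crossEntropy b a)) := by
    simp only [crossEntropy, Pi.add_apply, Pi.smul_apply, smul_eq_mul]
    refine (tendsto_finsetSum _ fun i _ => ?_).neg
    by_cases hbi : b i = 0
    · simp [hbi]
    · have hai : a i ≠ 0 := fun h => hbi (eq_zero_of_isMaxOn_entropy hS hSΔ ha hmax hb h)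
      have h : ContinuousAt (fun t : ℝ => b i * log ((1 - t) * a i + t * b i)) 0 := by
        fun_prop (disch := simpa)
      simpa using h.tendsto
  refine le_of_tendsto_of_tendsto (hlim.mono_left nhdsWithin_le_nhds)
    (by simpa using tendsto_const_nhds.sub tendsto_log_one_sub_nhdsGT_zero) ?_
  filter_upwards [Ioo_mem_nhdsGT one_pos] with t ht
  exact crossEntropy_segment_le_of_isMaxOn hS hSΔ ha hmax hb ht.1 ht.2

theorem exists_sum_exp_neg_le_one_forall_sum_mul_le (hS : Convex ℝ S) (hSΔ : S ⊆ stdSimplex ℝ X)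
    (ha : a ∈ S) (hmax : IsMaxOn entropy S a) {ε : ℝ} (hε : 0 < ε) :
    ∃ ℓ : X → ℝ, (∀ i, 0 ≤ ℓ i) ∧ ∑ i, exp (-ℓ i) ≤ 1 ∧
      ∀ ν ∈ S, ∑ i, ℓ i * ν i ≤ entropy a + ε := by
  have hA := hSΔ ha
  have hn : (0 : ℝ) < Fintype.card X := by
    have : Nonempty X := not_isEmpty_iff.1 fun _ => by simpa using hA.2
    exact_mod_cast Fintype.card_pos
  have hδ : 0 < 1 - exp (-ε) := sub_pos.2 (exp_lt_one_iff.2 (neg_lt_zero.2 hε))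
  set q : X → ℝ := fun i => exp (-ε) * a i + (1 - exp (-ε)) / Fintype.card X
  have hq_pos : ∀ i, 0 < q i := fun i => by have := hA.1 i; positivity
  have hq : q ∈ stdSimplex ℝ X := by
    refine ⟨fun i => (hq_pos i).le, ?_⟩
    simp only [q, sum_add_distrib, ← mul_sum, hA.2, sum_const, card_univ, nsmul_eq_mul]
    rw [mul_one, mul_div_cancel₀ _ hn.ne', add_sub_cancel]
  refine ⟨fun i => -log (q i), fun i => neg_nonneg.2 (log_nonpos (hq.1 i) ?_), ?_, fun ν hν => ?_⟩
  · exact (mem_Icc_of_mem_stdSimplex hq i).2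
  · simp only [neg_neg]
    rw [sum_congr rfl fun i _ => exp_log (hq_pos i), hq.2]
  · have hN := hSΔ hν
    have h := crossEntropy_le_of_mul_le hN.1 hA.1
      (fun i hi => eq_zero_of_isMaxOn_entropy hS hSΔ ha hmax hν hi) (exp_pos (-ε))
      (fun i => le_add_of_nonneg_right (div_nonneg hδ.le hn.le) : ∀ i, exp (-ε) * a i ≤ q i)
    rw [hN.2, log_exp] at h
    have hfirst := crossEntropy_le_entropy_of_isMaxOn hS hSΔ ha hmax hν
    have hsum : ∑ i, -log (q i) * ν i = crossEntropy ν q := by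
      rw [crossEntropy, ← sum_neg_distrib]
      exact sum_congr rfl fun i _ => by ring
    linarith

end IsMaxOn

end

theorem max_entropy_eq_minmax_codelength_general {X : Type*} [Fintype X] (μ : X → ℝ)
    (hμ0 : ∀ i, 0 ≤ μ i) (hμ1 : ∑ i, μ i = 1)
    (R : ℝ) (hR0 : 0 ≤ R) :
    sSup {h : ℝ | ∃ ν : X → ℝ, (∀ i, 0 ≤ ν i) ∧ ∑ i, ν i = 1 ∧
        ∑ i, |ν i - μ i| ≤ R ∧ h = -∑ i, ν i * Real.log (ν i)} =
    sInf {m : ℝ | ∃ ℓ : X → ℝ, (∀ i, 0 ≤ ℓ i) ∧ ∑ i, Real.exp (-ℓ i) ≤ 1 ∧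
        m = sSup {s : ℝ | ∃ ν : X → ℝ, (∀ i, 0 ≤ ν i) ∧ ∑ i, ν i = 1 ∧
          ∑ i, |ν i - μ i| ≤ R ∧ s = ∑ i, ℓ i * ν i}} := by
  simp only [setOf_exists_mem_tvBall]
  change sSup (entropy '' tvBall μ R) = _
  have hB := isCompact_tvBall μ R
  have hBΔ : tvBall μ R ⊆ stdSimplex ℝ X := inter_subset_left
  have hne : (tvBall μ R).Nonempty := ⟨μ, mem_tvBall_self ⟨hμ0, hμ1⟩ hR0⟩
  obtain ⟨a, ha, hmax⟩ := hB.exists_isMaxOn hne continuous_entropy.continuousOn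
  rw [IsGreatest.csSup_eq ⟨mem_image_of_mem _ ha, forall_mem_image.2 fun ν hν => hmax hν⟩]
  have hlower : entropy a ∈ lowerBounds {m | ∃ ℓ : X → ℝ, (∀ i, 0 ≤ ℓ i) ∧
      ∑ i, exp (-ℓ i) ≤ 1 ∧ m = sSup ((fun ν => ∑ i, ℓ i * ν i) '' tvBall μ R)} := by
    rintro _ ⟨ℓ, -, hℓ, rfl⟩
    exact (entropy_le_sum_mul_of_sum_exp_neg_le_one (hBΔ ha) hℓ).trans
      (le_csSup (hB.bddAbove_image (by fun_prop)) (mem_image_of_mem _ ha))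
  have hkraft := fun {ε : ℝ} (hε : 0 < ε) => exists_sum_exp_neg_le_one_forall_sum_mul_le
    (convex_tvBall μ R) hBΔ ha hmax hε
  refine le_antisymm ?_ (le_of_forall_pos_le_add fun ε hε => ?_)
  · obtain ⟨ℓ, hℓ0, hℓ, -⟩ := hkraft one_pos
    exact le_csInf ⟨_, ℓ, hℓ0, hℓ, rfl⟩ hlower
  · obtain ⟨ℓ, hℓ0, hℓ, hle⟩ := hkraft hε
    exact (csInf_le ⟨_, hlower⟩ ⟨ℓ, hℓ0, hℓ, rfl⟩).trans
      (csSup_le (hne.image _) (forall_mem_image.2 hle))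

theorem max_entropy_eq_minmax_codelength {X : Type*} [Fintype X] [Nonempty X] (μ : X → ℝ)
    (hμ0 : ∀ i, 0 ≤ μ i) (hμ1 : ∑ i, μ i = 1)
    (R : ℝ) (hR0 : 0 ≤ R) (hR2 : R ≤ 2) :
    sSup {h : ℝ | ∃ ν : X → ℝ, (∀ i, 0 ≤ ν i) ∧ ∑ i, ν i = 1 ∧
        ∑ i, |ν i - μ i| ≤ R ∧ h = -∑ i, ν i * Real.log (ν i)} =
    sInf {m : ℝ | ∃ ℓ : X → ℝ, (∀ i, 0 ≤ ℓ i) ∧ ∑ i, Real.exp (-ℓ i) ≤ 1 ∧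
        m = sSup {s : ℝ | ∃ ν : X → ℝ, (∀ i, 0 ≤ ν i) ∧ ∑ i, ν i = 1 ∧
          ∑ i, |ν i - μ i| ≤ R ∧ s = ∑ i, ℓ i * ν i}} :=
  max_entropy_eq_minmax_codelength_general μ hμ0 hμ1 R hR0
end

section
/- Let μ be a probability vector on a finite set X, ℓ : X → ℝ with maximum set X⁰ and minimum set X₀, and suppose 0 ≤ R ≤ 2·Σ_{i∈X₀} μ_i and R ≤ 2(1 − Σ_{i∈X⁰} μ_i). Define ν* by ν*_i = μ_i + (R/2)/|X⁰| for i ∈ X⁰, ν*_i = μ_i − (R/2)/|X₀| for i ∈ X₀, and ν*_i = μ_i otherwise, where additionally μ_i − (R/2)/|X₀| ≥ 0 for all i ∈ X₀. Then ν* is a probability vector, ‖ν* − μ‖_TV = R, and ν* maximizes Σ_i ℓ_i ν_i over the TV ball B_R(μ). -/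
theorem water_filling_first_regime {X : Type*} [Fintype X] [Nonempty X] [DecidableEq X] (μ ℓ : X → ℝ)
    (hμ0 : ∀ i, 0 < μ i) (hμ1 : ∑ i, μ i = 1)
    (Xsup Xinf : Finset X)
    (hXsup : ∀ i, i ∈ Xsup ↔ ℓ i = Finset.univ.sup' Finset.univ_nonempty ℓ)
    (hXinf : ∀ i, i ∈ Xinf ↔ ℓ i = Finset.univ.inf' Finset.univ_nonempty ℓ)
    (hdisj : Disjoint Xsup Xinf)
    (R : ℝ) (hR0 : 0 ≤ R)
    (hR1 : R ≤ 2 * ∑ i ∈ Xinf, μ i)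
    (hR2 : R ≤ 2 * (1 - ∑ i ∈ Xsup, μ i))
    (hpos : ∀ i ∈ Xinf, 0 ≤ μ i - (R / 2) / Xinf.card)
    (ν : X → ℝ)
    (hν : ν = fun i => if i ∈ Xsup then μ i + (R / 2) / Xsup.card
      else if i ∈ Xinf then μ i - (R / 2) / Xinf.card else μ i) :
    (∀ i, 0 ≤ ν i) ∧ ∑ i, ν i = 1 ∧ ∑ i, |ν i - μ i| = R ∧
    ∀ ρ : X → ℝ, (∀ i, 0 ≤ ρ i) → ∑ i, ρ i = 1 → ∑ i, |ρ i - μ i| ≤ R →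
      ∑ i, ℓ i * ρ i ≤ ∑ i, ℓ i * ν i := by
  obtain ⟨a, -, ha⟩ := Finset.exists_mem_eq_sup' (Finset.univ_nonempty (α := X)) ℓ
  obtain ⟨b, -, hb⟩ := Finset.exists_mem_eq_inf' (Finset.univ_nonempty (α := X)) ℓ
  set M := Finset.univ.sup' Finset.univ_nonempty ℓ with hM
  set m := Finset.univ.inf' Finset.univ_nonempty ℓ with hm
  have hsupne : Xsup.Nonempty := ⟨a, (hXsup a).2 ha.symm⟩
  have hinfne : Xinf.Nonempty := ⟨b, (hXinf b).2 hb.symm⟩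
  have hcs : (0:ℝ) < Xsup.card := by exact_mod_cast Finset.card_pos.2 hsupne
  have hci : (0:ℝ) < Xinf.card := by exact_mod_cast Finset.card_pos.2 hinfne
  have hleM : ∀ i, ℓ i ≤ M := fun i => Finset.le_sup' ℓ (Finset.mem_univ i)
  have hlem : ∀ i, m ≤ ℓ i := fun i => Finset.inf'_le ℓ (Finset.mem_univ i)
  have hmM : m ≤ M := (hlem a).trans (hleM a)
  set q := (R/2) / (Xsup.card:ℝ) with hq
  set q' := (R/2) / (Xinf.card:ℝ) with hq'
  have hq0 : 0 ≤ q := div_nonneg (by linarith) hcs.le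
  have hq'0 : 0 ≤ q' := div_nonneg (by linarith) hci.le
  have hsum1 : ∑ _i ∈ Xsup, q = R/2 := by
    rw [Finset.sum_const, nsmul_eq_mul, hq]
    field_simp
  have hsum2 : ∑ _i ∈ Xinf, q' = R/2 := by
    rw [Finset.sum_const, nsmul_eq_mul, hq']
    field_simp
  have hdiff : ∀ i, ν i - μ i =
      (if i ∈ Xsup then q else 0) + (if i ∈ Xinf then -q' else 0) := by
    intro i; subst hν
    by_cases h1 : i ∈ Xsup
    · have h2 : i ∉ Xinf := fun h => (Finset.disjoint_left.1 hdisj h1) h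
      simp [h1, h2]
    · by_cases h2 : i ∈ Xinf <;> simp [h1, h2]
  have hind : ∀ (f : X → ℝ) (s : Finset X),
      ∑ i, (if i ∈ s then f i else 0) = ∑ i ∈ s, f i := by
    intro f s
    rw [Finset.sum_ite_mem, Finset.univ_inter]
  have hzero : ∑ i, (ν i - μ i) = 0 := by
    calc ∑ i, (ν i - μ i)
        = ∑ i, ((if i ∈ Xsup then q else 0) + (if i ∈ Xinf then -q' else 0)) := by
          exact Finset.sum_congr rfl fun i _ => hdiff i
      _ = (∑ i ∈ Xsup, q) + (∑ i ∈ Xinf, -q') := by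
          rw [Finset.sum_add_distrib, hind (fun _ => q), hind (fun _ => -q')]
      _ = 0 := by rw [Finset.sum_neg_distrib, hsum1, hsum2]; ring
  have part1 : ∀ i, 0 ≤ ν i := by
    intro i; subst hν
    by_cases h1 : i ∈ Xsup
    · simp only [h1, if_pos]
      have := (hμ0 i).le; linarith [hq0]
    · by_cases h2 : i ∈ Xinf
      · simp only [h1, if_neg, h2, if_pos, not_false_iff]
        exact hpos i h2
      · simp only [h1, h2, if_neg, not_false_iff]
        exact (hμ0 i).le
  have part2 : ∑ i, ν i = 1 := by
    have : ∑ i, ν i = ∑ i, (ν i - μ i) + ∑ i, μ i := by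
      rw [← Finset.sum_add_distrib]; apply Finset.sum_congr rfl; intros; ring
    rw [this, hzero, hμ1]; ring
  have part3 : ∑ i, |ν i - μ i| = R := by
    have habs : ∀ i, |ν i - μ i| =
        (if i ∈ Xsup then q else 0) + (if i ∈ Xinf then q' else 0) := by
      intro i
      rw [hdiff i]
      by_cases h1 : i ∈ Xsup
      · have h2 : i ∉ Xinf := fun h => (Finset.disjoint_left.1 hdisj h1) h
        simp [h1, h2, abs_of_nonneg hq0]
      · by_cases h2 : i ∈ Xinf
        · simp [h1, h2, abs_of_nonpos (neg_nonpos.2 hq'0)]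
        · simp [h1, h2]
    calc ∑ i, |ν i - μ i|
        = ∑ i, ((if i ∈ Xsup then q else 0) + (if i ∈ Xinf then q' else 0)) :=
          Finset.sum_congr rfl fun i _ => habs i
      _ = (∑ i ∈ Xsup, q) + (∑ i ∈ Xinf, q') := by
          rw [Finset.sum_add_distrib, hind (fun _ => q), hind (fun _ => q')]
      _ = R := by rw [hsum1, hsum2]; ring
  refine ⟨part1, part2, part3, ?_⟩
  -- value of the objective at ν
  have hνval : ∑ i, ℓ i * ν i = ∑ i, ℓ i * μ i + (M - m) * (R/2) := by
    have hterm : ∀ i, ℓ i * (ν i - μ i) =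
        (if i ∈ Xsup then M * q else 0) + (if i ∈ Xinf then -(m * q') else 0) := by
      intro i
      rw [hdiff i]
      by_cases h1 : i ∈ Xsup
      · have h2 : i ∉ Xinf := fun h => (Finset.disjoint_left.1 hdisj h1) h
        have hli : ℓ i = M := (hXsup i).1 h1
        simp [h1, h2, hli]
      · by_cases h2 : i ∈ Xinf
        · have hli : ℓ i = m := (hXinf i).1 h2
          simp [h1, h2, hli]
        · simp [h1, h2]
    have : ∑ i, ℓ i * (ν i - μ i) = (M - m) * (R/2) := by
      calc ∑ i, ℓ i * (ν i - μ i)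
          = ∑ i, ((if i ∈ Xsup then M * q else 0) + (if i ∈ Xinf then -(m * q') else 0)) :=
            Finset.sum_congr rfl fun i _ => hterm i
        _ = (∑ i ∈ Xsup, M * q) + (∑ i ∈ Xinf, -(m * q')) := by
            rw [Finset.sum_add_distrib, hind (fun _ => M * q), hind (fun _ => -(m * q'))]
        _ = M * (∑ _i ∈ Xsup, q) - m * (∑ _i ∈ Xinf, q') := by
            rw [← Finset.mul_sum, Finset.sum_neg_distrib, ← Finset.mul_sum]; ring
        _ = (M - m) * (R/2) := by rw [hsum1, hsum2]; ring
    have hsplit : ∑ i, ℓ i * ν i = ∑ i, ℓ i * μ i + ∑ i, ℓ i * (ν i - μ i) := by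
      rw [← Finset.sum_add_distrib]; apply Finset.sum_congr rfl; intros; ring
    rw [hsplit, this]
  intro ρ hρ0 hρ1 hρR
  have hd0 : ∑ i, (ρ i - μ i) = 0 := by
    rw [Finset.sum_sub_distrib, hρ1, hμ1]; ring
  have hbound : ∀ i, ℓ i * (ρ i - μ i) ≤
      (M + m)/2 * (ρ i - μ i) + (M - m)/2 * |ρ i - μ i| := by
    intro i
    have hk : |ℓ i - (M + m)/2| ≤ (M - m)/2 :=
      abs_le.2 ⟨by linarith [hlem i], by linarith [hleM i]⟩
    have h1 : (ℓ i - (M + m)/2) * (ρ i - μ i) ≤ (M - m)/2 * |ρ i - μ i| := by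
      calc (ℓ i - (M + m)/2) * (ρ i - μ i)
          ≤ |(ℓ i - (M + m)/2) * (ρ i - μ i)| := le_abs_self _
        _ = |ℓ i - (M + m)/2| * |ρ i - μ i| := abs_mul _ _
        _ ≤ (M - m)/2 * |ρ i - μ i| := mul_le_mul_of_nonneg_right hk (abs_nonneg _)
    nlinarith [h1]
  have hmain : ∑ i, ℓ i * (ρ i - μ i) ≤ (M - m) * (R/2) := by
    calc ∑ i, ℓ i * (ρ i - μ i)
        ≤ ∑ i, ((M + m)/2 * (ρ i - μ i) + (M - m)/2 * |ρ i - μ i|) :=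
          Finset.sum_le_sum fun i _ => hbound i
      _ = (M + m)/2 * ∑ i, (ρ i - μ i) + (M - m)/2 * ∑ i, |ρ i - μ i| := by
          rw [Finset.sum_add_distrib, Finset.mul_sum, Finset.mul_sum]
      _ ≤ (M - m) * (R/2) := by
          rw [hd0]
          have h2 : (M - m)/2 * ∑ i, |ρ i - μ i| ≤ (M - m)/2 * R :=
            mul_le_mul_of_nonneg_left hρR (by linarith)
          linarith
  have hsplit : ∑ i, ℓ i * ρ i = ∑ i, ℓ i * μ i + ∑ i, ℓ i * (ρ i - μ i) := by
    rw [← Finset.sum_add_distrib]; apply Finset.sum_congr rfl; intros; ring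
  rw [hsplit, hνval]
  linarith
end
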